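/- arXiv:2008.00368 — 3 statements merged into one kernel-verified Lean document; each statement's English description precedes it below -/
import Mathlib

section
/- The entropy-based penalty is monotone along the tree order: if v is a descendant of v' in the value generalization hierarchy (so base(v) ⊆ base(v')), then E(v) ≤ E(v'), where E(u) = P(X ∈ base(u)) · H(X | X ∈ base(u)). -/
/-!
Enlarging `S` to `T` raises the normaliser `∑ b ∈ S, p b` to `∑ b ∈ T, p b`, which can only
increase each summand `-(p a * log (p a / ·))`; the summands for `a ∈ T \ S` are nonnegative
because `p a` never exceeds the normaliser.
-/

open scoped BigOperators

/-- Entropy-based penalty of a node with leaf-descendant set `base`: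
`E = P(X ∈ base) · H(X | X ∈ base) = ∑_{a ∈ base} −P(X=a)·log(P(X=a)/P(X∈base))`. -/
noncomputable def Epen {α : Type*} (p : α → ℝ) (base : Finset α) : ℝ :=
  ∑ a ∈ base, -(p a * Real.log (p a / ∑ b ∈ base, p b))

lemma neg_mul_log_div_nonneg {x s : ℝ} (hx : 0 ≤ x) (hxs : x ≤ s) :
    0 ≤ -(x * Real.log (x / s)) :=
  neg_nonneg.2 <| mul_nonpos_of_nonneg_of_nonpos hx <|
    Real.log_nonpos (div_nonneg hx (hx.trans hxs)) (div_le_one_of_le₀ hxs (hx.trans hxs))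

lemma neg_mul_log_div_le_of_le {x s t : ℝ} (hx : 0 ≤ x) (hxs : x ≤ s) (hst : s ≤ t) :
    -(x * Real.log (x / s)) ≤ -(x * Real.log (x / t)) := by
  rcases hx.eq_or_lt with rfl | hx
  · simp
  have hs : 0 < s := hx.trans_le hxs
  exact neg_le_neg <| mul_le_mul_of_nonneg_left
    (Real.log_le_log (div_pos hx (hs.trans_le hst)) (div_le_div_of_nonneg_left hx.le hs hst)) hx.le

theorem Epen_mono_general {α : Type*}
    (p : α → ℝ) (hp : ∀ a, 0 ≤ p a)
    (S T : Finset α) (hST : S ⊆ T) :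
    Epen p S ≤ Epen p T := by
  have le_sum : ∀ {U : Finset α} {a}, a ∈ U → p a ≤ ∑ b ∈ U, p b :=
    fun ha => Finset.single_le_sum (fun b _ => hp b) ha
  have hsum : ∑ b ∈ S, p b ≤ ∑ b ∈ T, p b :=
    Finset.sum_le_sum_of_subset_of_nonneg hST fun b _ _ => hp b
  calc Epen p S ≤ ∑ a ∈ S, -(p a * Real.log (p a / ∑ b ∈ T, p b)) :=
        Finset.sum_le_sum fun a ha => neg_mul_log_div_le_of_le (hp a) (le_sum ha) hsum
    _ ≤ Epen p T :=
        Finset.sum_le_sum_of_subset_of_nonneg hST fun a ha _ =>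
          neg_mul_log_div_nonneg (hp a) (le_sum ha)

/-- Monotonicity of the entropy-based penalty along the tree order: if `v` is a
descendant of `v'` (so `base v ⊆ base v'`), then `E(v) ≤ E(v')`. -/
theorem Epen_mono {α : Type*} [Fintype α]
    (p : α → ℝ) (hp : ∀ a, 0 ≤ p a) (hp1 : ∑ a, p a = 1)
    (S T : Finset α) (hST : S ⊆ T) :
    Epen p S ≤ Epen p T :=
  Epen_mono_general p hp S T hST
end

section
/- The weighted conflict-set pricing function is monotone under query determinacy: let S be a finite set of candidate databases with nonnegative weights w, and for a query Q over database D define price(Q) = Σ { w(D') : D' ∈ S, Q(D') ≠ Q(D) }. If query Q1 determines query Q2 (meaning there exists a function f with Q2(D') = f(Q1(D')) for every database D'), then price(Q2) ≤ price(Q1). -/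
open scoped Classical

/-- Weighted conflict-set price of a query `Q` over the true database `D`
with support set `S` and weights `w`: total weight of the support databases
on which `Q` disagrees with its answer on `D`. -/
noncomputable def queryPrice {DB A : Type*} (S : Finset DB) (w : DB → ℝ) (D : DB)
    (Q : DB → A) : ℝ :=
  ∑ D' ∈ S.filter (fun D' => Q D' ≠ Q D), w D'

theorem queryPrice_le_of_conflict_imp {DB A₁ A₂ : Type*} (S : Finset DB) (w : DB → ℝ)
    (hw : ∀ D' ∈ S, 0 ≤ w D') (D : DB) (Q₁ : DB → A₁) (Q₂ : DB → A₂)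
    (hconf : ∀ D' ∈ S, Q₂ D' ≠ Q₂ D → Q₁ D' ≠ Q₁ D) :
    queryPrice S w D Q₂ ≤ queryPrice S w D Q₁ := by
  refine Finset.sum_le_sum_of_subset_of_nonneg ?_
    fun D' hD' _ => hw D' (Finset.mem_of_mem_filter D' hD')
  intro D' hD'
  rw [Finset.mem_filter] at hD' ⊢
  exact ⟨hD'.1, hconf D' hD'.1 hD'.2⟩

/-- Weighted conflict-set pricing is monotone under query determinacy
(arbitrage-freeness): if `Q1` determines `Q2` (i.e. `Q2` factors through `Q1`)
then `price(Q2) ≤ price(Q1)`. -/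
theorem queryPrice_mono_of_determines {DB A₁ A₂ : Type*}
    (S : Finset DB) (w : DB → ℝ) (hw : ∀ D', 0 ≤ w D') (D : DB)
    (Q₁ : DB → A₁) (Q₂ : DB → A₂)
    (hdet : ∃ f : A₁ → A₂, ∀ D', Q₂ D' = f (Q₁ D')) :
    queryPrice S w D Q₂ ≤ queryPrice S w D Q₁ := by
  obtain ⟨f, hf⟩ := hdet
  refine queryPrice_le_of_conflict_imp S w (fun D' _ => hw D') D Q₁ Q₂
    fun D' _ hne heq => hne ?_
  rw [hf, hf, heq]
end

section
/- Weighted conflict-set pricing is history-aware/regret-free in the following sense: with support set S, weights w ≥ 0, and database D, if after purchasing bundle B1 the seller reprices using the reduced support set S1 = {D' ∈ S : Q(D') = Q(D) for all Q ∈ B1}, then price_S(B1) + price_{S1}(B2) = price_S(B1 ∪ B2) for any bundle B2. -/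
/-! Sequential purchase splits the conflict set of `B₁ ∪ B₂` into the databases that
conflict with `B₁` and those that agree with `D` on `B₁` but conflict with `B₂`; these
are disjoint, so the two prices add up to the one-shot price. -/

open scoped Classical

/-- Weighted conflict-set price of a bundle `B` of queries with current
support set `S`. -/
noncomputable def bundlePrice {DB ι A : Type*} (S : Finset DB) (w : DB → ℝ) (D : DB)
    (eval : ι → DB → A) (B : Finset ι) : ℝ :=
  ∑ D' ∈ S.filter (fun D' => ∃ q ∈ B, eval q D' ≠ eval q D), w D'

theorem Finset.sum_filter_or_eq_add {α M : Type*} [AddCommMonoid M] (s : Finset α)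
    (f : α → M) (p q : α → Prop) [DecidablePred p] [DecidablePred q] :
    ∑ x ∈ s.filter (fun x => p x ∨ q x), f x =
      ∑ x ∈ s.filter p, f x + ∑ x ∈ (s.filter (fun x => ¬ p x)).filter q, f x := by
  rw [← Finset.sum_filter_add_sum_filter_not _ p, Finset.filter_filter,
    Finset.filter_filter, Finset.filter_filter]
  congr 2 <;> ext x <;> simp only [Finset.mem_filter] <;> tauto

theorem bundlePrice_history_aware_general {DB ι A : Type*}
    (S : Finset DB) (w : DB → ℝ) (D : DB)
    (eval : ι → DB → A) (B₁ B₂ : Finset ι) :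
    bundlePrice S w D eval B₁ +
        bundlePrice (S.filter (fun D' => ∀ q ∈ B₁, eval q D' = eval q D))
          w D eval B₂ =
      bundlePrice S w D eval (B₁ ∪ B₂) := by
  have conflicts_union : ∀ D' : DB, (∃ q ∈ B₁ ∪ B₂, eval q D' ≠ eval q D) ↔
      (∃ q ∈ B₁, eval q D' ≠ eval q D) ∨ (∃ q ∈ B₂, eval q D' ≠ eval q D) := by
    simp only [Finset.mem_union, or_and_right, exists_or, implies_true]
  have agrees_iff : ∀ D' : DB,
      (∀ q ∈ B₁, eval q D' = eval q D) ↔ ¬ ∃ q ∈ B₁, eval q D' ≠ eval q D := by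
    simp
  simp only [bundlePrice, conflicts_union, agrees_iff]
  exact (Finset.sum_filter_or_eq_add S w _ _).symm

/-- History-awareness / regret-freeness of weighted conflict-set pricing:
buying `B₁` from support set `S`, updating the support set to the databases
agreeing with `D` on all of `B₁`, and then buying `B₂`, costs exactly the
same as buying `B₁ ∪ B₂` at once. -/
theorem bundlePrice_history_aware {DB ι A : Type*}
    (S : Finset DB) (w : DB → ℝ) (hw : ∀ D', 0 ≤ w D') (D : DB)
    (eval : ι → DB → A) (B₁ B₂ : Finset ι) :
    bundlePrice S w D eval B₁ +
        bundlePrice (S.filter (fun D' => ∀ q ∈ B₁, eval q D' = eval q D))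
          w D eval B₂ =
      bundlePrice S w D eval (B₁ ∪ B₂) :=
  bundlePrice_history_aware_general S w D eval B₁ B₂
end
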